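/- arXiv:1608.06220 — 10 statements merged into one kernel-verified Lean document; each statement's English description precedes it below -/
import Mathlib

section
/- For every integer p, with h = p^2 - 3, the quadruple A = p^3 + 2p^2 - 3p - 2, B = p^3 - p - 2, C = p^3 - 2p^2 - 3p + 2, D = p^3 - p + 2 satisfies A^4 + h·B^4 = C^4 + h·D^4 (Piezas's identity). -/
theorem stmt_1 : ∀ p : ℤ, (p^3+2*p^2-3*p-2)^4 + (p^2-3) * (p^3-p-2)^4 = (p^3-2*p^2-3*p+2)^4 + (p^2-3) * (p^3-p+2)^4 := by
  intro p; ring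
end

section
/- For every integer p, with h = p^2 + 2, the quadruple A = p^3 + 2p + 1, B = p^2 - p + 1, C = p^3 + 2p - 1, D = p^2 + p + 1 satisfies A^4 + h·B^4 = C^4 + h·D^4. -/
theorem stmt_3 : ∀ p : ℤ, (p^3+2*p+1)^4 + (p^2+2) * (p^2-p+1)^4 = (p^3+2*p-1)^4 + (p^2+2) * (p^2+p+1)^4 := by intro p; ring
end

section
/- For every integer p, with h = 2p^4 - 2, the quadruple A = p^2 + 2p - 1, B = p - 1, C = p^2 - 2p - 1, D = p + 1 satisfies A^4 + h·B^4 = C^4 + h·D^4. -/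
theorem stmt_7 : ∀ p : ℤ, (p^2+2*p-1)^4 + (2*p^4-2) * (p-1)^4 = (p^2-2*p-1)^4 + (2*p^4-2) * (p+1)^4 := by
  intro p; ring
end

section
/- For every integer p, with h = p^4 + 3p^2 + 1, the quadruple A = p^2 + p + 1, B = p - 1, C = p^2 - p + 1, D = p + 1 satisfies A^4 + h·B^4 = C^4 + h·D^4. -/
theorem stmt_8 : ∀ p : ℤ, (p^2+p+1)^4 + (p^4+3*p^2+1) * (p-1)^4 = (p^2-p+1)^4 + (p^4+3*p^2+1) * (p+1)^4 := by
  intro p; ring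
end

section
/- For all integers p and q, with h = (p^2 + 2q^2)·q^2, the quadruple A = q(p^3 + 2pq^2 + q^3), B = q(p^2 - pq + q^2), C = q(p^3 + 2pq^2 - q^3), D = q(p^2 + pq + q^2) satisfies A^4 + h·B^4 = C^4 + h·D^4. -/
theorem stmt_9 : ∀ p q : ℤ, (q*(p^3+2*p*q^2+q^3))^4 + ((p^2+2*q^2)*q^2) * (q*(p^2-p*q+q^2))^4 = (q*(p^3+2*p*q^2-q^3))^4 + ((p^2+2*q^2)*q^2) * (q*(p^2+p*q+q^2))^4 := by
  intro p q; ring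
end

section
/- For all integers p and q, with h = 2(p^4 - q^4), the quadruple A = q(p^2 + 2pq - q^2), B = q(p - q), C = q(p^2 - 2pq - q^2), D = q(p + q) satisfies A^4 + h·B^4 = C^4 + h·D^4. -/
theorem stmt_13 : ∀ p q : ℤ, (q*(p^2+2*p*q-q^2))^4 + (2*(p^4-q^4)) * (q*(p-q))^4 = (q*(p^2-2*p*q-q^2))^4 + (2*(p^4-q^4)) * (q*(p+q))^4 := by
  intro p q; ring
end

section
/- For all integers p and q, with h = p^4 + 3p^2q^2 + q^4, the quadruple A = p^2 + pq + q^2, B = p - q, C = p^2 - pq + q^2, D = p + q satisfies A^4 + h·B^4 = C^4 + h·D^4. -/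
theorem stmt_14 : ∀ p q : ℤ, (p^2+p*q+q^2)^4 + (p^4+3*p^2*q^2+q^4) * (p-q)^4 = (p^2-p*q+q^2)^4 + (p^4+3*p^2*q^2+q^4) * (p+q)^4 := by
  intro p q; ring
end

section
/- For every integer p ≥ 2, the quadruple A = p^2 + p + 1, B = p - 1, C = p^2 - p + 1, D = p + 1 with h = p^4 + 3p^2 + 1 gives a nontrivial solution of A^4 + h·B^4 = C^4 + h·D^4, in the sense that {A, B} ≠ {C, D} as multisets and A, B, C, D are all positive. -/
theorem stmt_16 : ∀ p : ℤ, 2 ≤ p → (p^2+p+1)^4 + (p^4+3*p^2+1) * (p-1)^4 = (p^2-p+1)^4 + (p^4+3*p^2+1) * (p+1)^4 ∧ ({p^2+p+1, p-1} : Multiset ℤ) ≠ {p^2-p+1, p+1} ∧ 0 < p^2+p+1 ∧ 0 < p-1 ∧ 0 < p^2-p+1 ∧ 0 < p+1 := by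
  intro p hp
  refine ⟨by ring, ?_, by nlinarith, by omega, by nlinarith, by omega⟩
  intro h
  rw [Multiset.insert_eq_cons, Multiset.insert_eq_cons, Multiset.cons_eq_cons] at h
  rcases h with ⟨h1, _⟩ | ⟨_, c, h1, h2⟩
  · omega
  · have : (p^2-p+1) ∈ ({p-1} : Multiset ℤ) := h1 ▸ Multiset.mem_cons_self _ _
    rw [Multiset.mem_singleton] at this
    nlinarith
end

section
/- For every integer h of the form h = p^2 + 2 with p an integer, p ≥ 1, the equation A^4 + h·B^4 = C^4 + h·D^4 has a solution in positive integers with (A, B) ≠ (C, D). -/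
theorem stmt_17 : ∀ p : ℤ, 1 ≤ p → ∃ A B C D : ℤ, 0 < A ∧ 0 < B ∧ 0 < C ∧ 0 < D ∧ A^4 + (p^2+2) * B^4 = C^4 + (p^2+2) * D^4 ∧ (A, B) ≠ (C, D) := by
  intro p hp
  refine ⟨p^3+2*p-1, p^2+p+1, p^3+2*p+1, p^2-p+1, ?_, ?_, ?_, ?_, by ring, ?_⟩
  · nlinarith [pow_le_pow_left₀ (by linarith : (0:ℤ) ≤ 1) hp 3]
  · nlinarith [sq_nonneg p]
  · nlinarith [pow_le_pow_left₀ (by linarith : (0:ℤ) ≤ 1) hp 3]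
  · nlinarith [sq_nonneg (p-1)]
  · intro h
    have := (Prod.mk.injEq _ _ _ _).mp h
    omega
end

section
/- For every integer h of the form h = 2p^4 - 2 with p an integer, p ≥ 4, the equation A^4 + h·B^4 = C^4 + h·D^4 has a solution in positive integers with (A, B) ≠ (C, D). -/
theorem stmt_18 : ∀ p : ℤ, 4 ≤ p → ∃ A B C D : ℤ, 0 < A ∧ 0 < B ∧ 0 < C ∧ 0 < D ∧ A^4 + (2*p^4-2) * B^4 = C^4 + (2*p^4-2) * D^4 ∧ (A, B) ≠ (C, D) := by
  intro p hp
  refine ⟨p^2 - 2*p - 1, p + 1, p^2 + 2*p - 1, p - 1, ?_, ?_, ?_, ?_, by ring, ?_⟩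
  · nlinarith
  · linarith
  · nlinarith
  · linarith
  · intro h
    have h1 : p^2 - 2*p - 1 = p^2 + 2*p - 1 := congrArg Prod.fst h
    nlinarith
end
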